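/- For every integer m ≥ 4 and every n ≥ 1, the inequality H_{n,(2^m)}(x) ≥ H_{n,(3,1^{2m−3})}(x) holds for all x ∈ [0,∞)^n. Explicitly: (h_{n,2}(x))^m / C(n+1,2)^m ≥ h_{n,3}(x) · (h_{n,1}(x))^{2m−3} / (C(n+2,3) · n^{2m−3}) for all x ∈ [0,∞)^n. -/

import Mathlib

/-- The complete homogeneous symmetric polynomial `h_{n,k}`, as a function on `ℝ^n`:
the sum of all monomials of total degree `k` in `x 0, …, x (n-1)` (with `h_{n,0} = 1`). -/
noncomputable def hsym (n k : ℕ) (x : Fin n → ℝ) : ℝ :=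
  ∑ d ∈ Finset.Nat.antidiagonalTuple n k, ∏ i, x i ^ d i

/-!
Write `H_k` for `h_{n,k} / C(n+k-1, k)`, so that the claim is `H_3 · H_1^{2m-3} ≤ H_2^m`.
Cauchy–Schwarz gives `H_1^2 ≤ H_2`, which reduces everything to `m = 4`, i.e.
`H_3 H_1^5 ≤ H_2^4`. For that, write the power sums through the mean `c` and
`s = (∑ (x_i - c)^2)^{1/2}`: `p_1 = n c`, `p_2 = n c^2 + s^2`, and `p_3 ≤ n c^3 + 3 c s^2 + s^3`
since `∑ (x_i - c)^3 ≤ s^3`.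
Substituting into the power-sum expressions of `h_2` and `h_3` leaves a polynomial inequality in
`n, c, s` with an explicit sum-of-squares certificate.
-/

open Finset

theorem Finset.Nat.sum_antidiagonalTuple_succ {M : Type*} [AddCommMonoid M] (n k : ℕ)
    (f : (Fin (n + 1) → ℕ) → M) :
    ∑ d ∈ antidiagonalTuple (n + 1) k, f d =
      ∑ p ∈ antidiagonal k, ∑ d ∈ antidiagonalTuple n p.2, f (Fin.cons p.1 d) := by
  simp only [Finset.sum, antidiagonalTuple, Multiset.Nat.antidiagonalTuple,
    List.Nat.antidiagonalTuple, ← Multiset.coe_bind, Multiset.map_bind, Multiset.sum_bind,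
    ← Multiset.map_coe, Multiset.map_map]
  rfl

lemma hsym_zero_right (n : ℕ) (x : Fin n → ℝ) : hsym n 0 x = 1 := by
  simp [hsym, Nat.antidiagonalTuple_zero_right]

lemma hsym_succ (n k : ℕ) (x : Fin (n + 1) → ℝ) :
    hsym (n + 1) k x = ∑ j ∈ range (k + 1), x 0 ^ j * hsym n (k - j) (fun i => x i.succ) := by
  rw [← Nat.sum_antidiagonal_eq_sum_range_succ fun i j => x 0 ^ i * hsym n j fun i => x i.succ]
  simp [hsym, Nat.sum_antidiagonalTuple_succ, Fin.prod_univ_succ, mul_sum]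

lemma hsym_one (n : ℕ) (x : Fin n → ℝ) : hsym n 1 x = ∑ i, x i := by
  induction n with
  | zero => simp [hsym]
  | succ n ih =>
    simp [hsym_succ, sum_range_succ, hsym_zero_right, ih, Fin.sum_univ_succ, add_comm]

lemma two_mul_hsym_two (n : ℕ) (x : Fin n → ℝ) :
    2 * hsym n 2 x = (∑ i, x i) ^ 2 + ∑ i, x i ^ 2 := by
  induction n with
  | zero => simp [hsym]
  | succ n ih =>
    simp only [hsym_succ, sum_range_succ, sum_range_zero, Nat.reduceSub, Nat.sub_zero,
      hsym_zero_right, hsym_one, Fin.sum_univ_succ]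
    linear_combination ih (fun i => x i.succ)

lemma six_mul_hsym_three (n : ℕ) (x : Fin n → ℝ) :
    6 * hsym n 3 x = (∑ i, x i) ^ 3 + 3 * (∑ i, x i) * ∑ i, x i ^ 2 + 2 * ∑ i, x i ^ 3 := by
  induction n with
  | zero => simp [hsym]
  | succ n ih =>
    simp only [hsym_succ, sum_range_succ, sum_range_zero, Nat.reduceSub, Nat.sub_zero,
      hsym_zero_right, hsym_one, Fin.sum_univ_succ]
    linear_combination ih (fun i => x i.succ) + 3 * x 0 * two_mul_hsym_two n (fun i => x i.succ)

section PowerSums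

variable {ι : Type*} (s : Finset ι) (x : ι → ℝ)

lemma sum_pow_three_le_sqrt_sum_sq_pow_three :
    ∑ i ∈ s, x i ^ 3 ≤ √(∑ i ∈ s, x i ^ 2) ^ 3 := by
  set r := √(∑ i ∈ s, x i ^ 2)
  have hr : r ^ 2 = ∑ i ∈ s, x i ^ 2 := Real.sq_sqrt (sum_nonneg fun i _ => sq_nonneg _)
  have hle : ∀ i ∈ s, x i ≤ r := fun i hi =>
    (le_abs_self _).trans <| Real.abs_le_sqrt <|
      single_le_sum (f := fun j => x j ^ 2) (fun j _ => sq_nonneg _) hi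
  calc ∑ i ∈ s, x i ^ 3 = ∑ i ∈ s, x i ^ 2 * x i := by simp only [pow_succ]
    _ ≤ ∑ i ∈ s, x i ^ 2 * r :=
        sum_le_sum fun i hi => mul_le_mul_of_nonneg_left (hle i hi) (sq_nonneg _)
    _ = r ^ 3 := by rw [← sum_mul, ← hr]; ring

variable {s x} {c : ℝ}

lemma sum_sq_eq_of_sum_eq_card_mul (hc : ∑ i ∈ s, x i = #s * c) :
    ∑ i ∈ s, x i ^ 2 = #s * c ^ 2 + ∑ i ∈ s, (x i - c) ^ 2 := by
  have hsq : ∑ i ∈ s, (x i - c) ^ 2 =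
      ∑ i ∈ s, x i ^ 2 - 2 * c * ∑ i ∈ s, x i + #s * c ^ 2 :=
    calc ∑ i ∈ s, (x i - c) ^ 2 = ∑ i ∈ s, (x i ^ 2 - 2 * c * x i + c ^ 2) :=
          sum_congr rfl fun i _ => by ring
      _ = _ := by simp only [sum_add_distrib, sum_sub_distrib, ← mul_sum, sum_const, nsmul_eq_mul]
  rw [hsq, hc]; ring

lemma sum_pow_three_le_of_sum_eq_card_mul (hc : ∑ i ∈ s, x i = #s * c) :
    ∑ i ∈ s, x i ^ 3 ≤
      #s * c ^ 3 + 3 * c * ∑ i ∈ s, (x i - c) ^ 2 + √(∑ i ∈ s, (x i - c) ^ 2) ^ 3 := by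
  have hcube : ∑ i ∈ s, (x i - c) ^ 3 =
      ∑ i ∈ s, x i ^ 3 - 3 * c * ∑ i ∈ s, x i ^ 2 + 3 * c ^ 2 * ∑ i ∈ s, x i
        - #s * c ^ 3 :=
    calc ∑ i ∈ s, (x i - c) ^ 3
          = ∑ i ∈ s, (x i ^ 3 - 3 * c * x i ^ 2 + 3 * c ^ 2 * x i - c ^ 3) :=
          sum_congr rfl fun i _ => by ring
      _ = _ := by simp only [sum_add_distrib, sum_sub_distrib, ← mul_sum, sum_const, nsmul_eq_mul]
  linear_combination sum_pow_three_le_sqrt_sum_sq_pow_three s (fun i => x i - c) - hcube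
    + 3 * c * sum_sq_eq_of_sum_eq_card_mul hc - 3 * c ^ 2 * hc

end PowerSums

lemma mean_dev_polynomial_le {N : ℝ} (hN : 0 ≤ N) (c s : ℝ) :
    (N * (N + 1)) ^ 3 * c ^ 5 *
        (N * (N + 1) * (N + 2) * c ^ 3 + 3 * (N + 2) * c * s ^ 2 + 2 * s ^ 3) ≤
      (N + 2) * (N * (N + 1) * c ^ 2 + s ^ 2) ^ 4 := by
  set P := N * (N + 1)
  have hP : 0 ≤ 6 * (N + 2) ^ 2 - P := by nlinarith
  have hsos : (N + 2) * ((N + 2) * (P * c ^ 2 + s ^ 2) ^ 4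
        - P ^ 3 * c ^ 5 * (P * (N + 2) * c ^ 3 + 3 * (N + 2) * c * s ^ 2 + 2 * s ^ 3))
      = P ^ 3 * c ^ 4 * s ^ 2 * ((N + 2) * c - s) ^ 2
        + (6 * (N + 2) ^ 2 - P) * P ^ 2 * c ^ 4 * s ^ 4
        + 4 * (N + 2) ^ 2 * P * c ^ 2 * s ^ 6 + (N + 2) ^ 2 * s ^ 8 := by ring
  refine sub_nonneg.mp ((mul_nonneg_iff_of_pos_left (by positivity : (0 : ℝ) < N + 2)).mp ?_)
  rw [hsos]
  positivity

/-- The paper's term-normalized `H_{n,k}`. -/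
noncomputable def normalizedHsym (n k : ℕ) (x : Fin n → ℝ) : ℝ :=
  hsym n k x / ((n + k - 1).choose k : ℝ)

section NormalizedHsym

variable (n : ℕ) (x : Fin n → ℝ)

lemma normalizedHsym_one : normalizedHsym n 1 x = (∑ i, x i) / n := by
  simp [normalizedHsym, hsym_one]

lemma normalizedHsym_two :
    normalizedHsym n 2 x = ((∑ i, x i) ^ 2 + ∑ i, x i ^ 2) / (n * (n + 1)) := by
  have hC : ((n + 1).choose 2 : ℝ) = n * (n + 1) / 2 := by
    rw [Nat.cast_choose_two]; push_cast; ring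
  rw [normalizedHsym, ← two_mul_hsym_two, show n + 2 - 1 = n + 1 by omega, hC,
    div_div_eq_mul_div]
  ring

lemma normalizedHsym_three :
    normalizedHsym n 3 x =
      ((∑ i, x i) ^ 3 + 3 * (∑ i, x i) * ∑ i, x i ^ 2 + 2 * ∑ i, x i ^ 3) /
        (n * (n + 1) * (n + 2)) := by
  have hC : ((n + 2).choose 3 : ℝ) = n * (n + 1) * (n + 2) / 6 := by
    simp [Nat.cast_choose_eq_ascPochhammer_div, ascPochhammer_succ_eval, Nat.factorial]
  rw [normalizedHsym, ← six_mul_hsym_three, show n + 3 - 1 = n + 2 by omega, hC,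
    div_div_eq_mul_div]
  ring

end NormalizedHsym

lemma normalizedHsym_one_sq_le_two {n : ℕ} (hn : 0 < n) (x : Fin n → ℝ) :
    normalizedHsym n 1 x ^ 2 ≤ normalizedHsym n 2 x := by
  have hN : (0 : ℝ) < n := Nat.cast_pos.mpr hn
  have hcs : (∑ i, x i) ^ 2 ≤ n * ∑ i, x i ^ 2 := by
    simpa using sq_sum_le_card_mul_sum_sq (s := univ) (f := x)
  rw [normalizedHsym_one, normalizedHsym_two, div_pow,
    div_le_div_iff₀ (by positivity) (by positivity)]
  nlinarith [mul_le_mul_of_nonneg_left hcs hN.le]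

lemma normalizedHsym_three_mul_one_pow_five_le {n : ℕ} (hn : 0 < n) {x : Fin n → ℝ}
    (hx : ∀ i, 0 ≤ x i) :
    normalizedHsym n 3 x * normalizedHsym n 1 x ^ 5 ≤ normalizedHsym n 2 x ^ 4 := by
  have hN : (0 : ℝ) < n := Nat.cast_pos.mpr hn
  obtain ⟨c, hsum⟩ : ∃ c, ∑ i, x i = n * c := ⟨(∑ i, x i) / n, by field_simp⟩
  have h1 : normalizedHsym n 1 x = c := by
    rw [normalizedHsym_one, hsum]; field_simp
  have hc : 0 ≤ c := (mul_nonneg_iff_of_pos_left hN).mp (hsum ▸ sum_nonneg fun i _ => hx i)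
  have hsum_card : ∑ i, x i = #(univ : Finset (Fin n)) * c := by simpa using hsum
  have hS2 := sum_sq_eq_of_sum_eq_card_mul hsum_card
  have hS3 := sum_pow_three_le_of_sum_eq_card_mul hsum_card
  have hq := Real.sq_sqrt (sum_nonneg fun i (_ : i ∈ univ) => sq_nonneg (x i - c))
  generalize √(∑ i, (x i - c) ^ 2) = s at hS3 hq
  rw [← hq] at hS2 hS3
  simp only [card_univ, Fintype.card_fin] at hS2 hS3
  set N : ℝ := (n : ℝ)
  have h2 : normalizedHsym n 2 x = (N * (N + 1) * c ^ 2 + s ^ 2) / (N * (N + 1)) := by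
    rw [normalizedHsym_two, hsum, hS2]; ring
  have h3 : normalizedHsym n 3 x ≤
      (N * (N + 1) * (N + 2) * c ^ 3 + 3 * (N + 2) * c * s ^ 2 + 2 * s ^ 3) /
        (N * (N + 1) * (N + 2)) := by
    rw [normalizedHsym_three, hsum, hS2]
    gcongr ?_ / _
    linarith
  rw [h1, h2]
  calc _ ≤ (N * (N + 1) * (N + 2) * c ^ 3 + 3 * (N + 2) * c * s ^ 2 + 2 * s ^ 3) /
        (N * (N + 1) * (N + 2)) * c ^ 5 := by gcongr
    _ ≤ _ := by
      rw [div_mul_eq_mul_div, div_pow, div_le_div_iff₀ (by positivity) (by positivity)]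
      nlinarith [mul_le_mul_of_nonneg_left (mean_dev_polynomial_le hN.le c s)
        (by positivity : 0 ≤ N * (N + 1))]

/-- For every `m ≥ 4` and `n ≥ 1`, `H_{n,(2^m)} ≥ H_{n,(3,1^{2m−3})}` on `[0,∞)^n`:
explicitly, `h_{n,2}^m / C(n+1,2)^m ≥ h_{n,3}·h_{n,1}^{2m−3} / (C(n+2,3)·n^{2m−3})`. -/
theorem H_two_pow_m_ge (m n : ℕ) (hm : 4 ≤ m) (hn : 1 ≤ n)
    (x : Fin n → ℝ) (hx : ∀ i, 0 ≤ x i) :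
    hsym n 3 x * (hsym n 1 x) ^ (2 * m - 3) /
        (((n + 2).choose 3 : ℝ) * (n : ℝ) ^ (2 * m - 3)) ≤
      (hsym n 2 x) ^ m / (((n + 1).choose 2 : ℝ)) ^ m := by
  obtain ⟨k, rfl⟩ := Nat.exists_eq_add_of_le' hm
  have key : normalizedHsym n 3 x * normalizedHsym n 1 x ^ 5 * (normalizedHsym n 1 x ^ 2) ^ k ≤
      normalizedHsym n 2 x ^ 4 * normalizedHsym n 2 x ^ k :=
    mul_le_mul (normalizedHsym_three_mul_one_pow_five_le hn hx)
      (pow_le_pow_left₀ (sq_nonneg _) (normalizedHsym_one_sq_le_two hn x) k)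
      (by positivity) (by positivity)
  convert key using 1
  · rw [show 2 * (k + 4) - 3 = 5 + 2 * k by omega]
    simp only [normalizedHsym, Nat.add_one_sub_one, add_tsub_cancel_right, Nat.choose_one_right]
    ring
  · simp only [normalizedHsym, Nat.add_one_sub_one]
    ring
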